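/- arXiv:2504.15540 — 2 statements merged into one kernel-verified Lean document; each statement's English description precedes it below -/
import Mathlib

section
/- Let z be a second-order random-walk process: z[k] is the first component of the state r[k] evolving as r[k+1] = A r[k] + ν[k] with A = [[1,τ],[0,1]], where ν[k] are i.i.d. centered Gaussian vectors in ℝ² with covariance Q(q) having entries Q₁₁ = qᵀ(τΣ₁ + (τ³/3)Σ₂)q, Q₁₂ = Q₂₁ = (τ²/2)qᵀΣ₂q, Q₂₂ = τ qᵀΣ₂q. Then the second difference z[k+2] − 2z[k+1] + z[k] equals C(A − 2I)ν[k] + Cν[k+1] where C = (1, 0), and its variance equals qᵀ(2τΣ₁ + (2τ³/3)Σ₂)q; hence the Allan variance E[(Δ²z)²]/(2τ²) equals qᵀΓ(τ)q/τ², where Γ(τ) = τΣ₁ + (τ³/3)Σ₂. -/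
/-!
Because `A - 1` is nilpotent, `(A - 1)² = A² - 2A + 1 = 0`, so the second difference of the
state forgets the initial state: `r₂ - 2r₁ + r₀ = (A - 2)ν₀ + ν₁`. Reading off the first
coordinate, `Δ²z = u ⬝ ν₀ + ν₁ 0` with `u = (-1, τ)`; since `ν₀` and `ν₁` are uncorrelated the
second moment is `uᵀ Q u + Q₁₁ = 2Q₁₁ - 2τQ₁₂ + τ²Q₂₂ = qᵀ(2τΣ₁ + (2τ³/3)Σ₂)q`.
-/

open MeasureTheory Matrix

section SecondMoments

variable {Ω ι : Type*} [MeasurableSpace Ω] [Fintype ι]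

noncomputable def crossMoment (μ : Measure Ω) (X Y : Ω → ι → ℝ) : Matrix ι ι ℝ :=
  Matrix.of fun s t => ∫ ω, X ω s * Y ω t ∂μ

variable {μ : Measure Ω} {X Y : Ω → ι → ℝ}

lemma dotProduct_mul_dotProduct (u v x y : ι → ℝ) :
    (u ⬝ᵥ x) * (v ⬝ᵥ y) = ∑ s, ∑ t, u s * v t * (x s * y t) := by
  simp only [dotProduct, Finset.sum_mul_sum, mul_mul_mul_comm]

lemma integrable_dotProduct_mul_dotProduct
    (hXY : ∀ s t, Integrable (fun ω => X ω s * Y ω t) μ) (u v : ι → ℝ) :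
    Integrable (fun ω => (u ⬝ᵥ X ω) * (v ⬝ᵥ Y ω)) μ := by
  simp only [dotProduct_mul_dotProduct]
  exact integrable_finsetSum _ fun s _ => integrable_finsetSum _ fun t _ =>
    (hXY s t).const_mul _

lemma integral_dotProduct_mul_dotProduct
    (hXY : ∀ s t, Integrable (fun ω => X ω s * Y ω t) μ) (u v : ι → ℝ) :
    ∫ ω, (u ⬝ᵥ X ω) * (v ⬝ᵥ Y ω) ∂μ = u ⬝ᵥ crossMoment μ X Y *ᵥ v := by
  simp only [dotProduct_mul_dotProduct]
  rw [integral_finsetSum _ fun s _ => integrable_finsetSum _ fun t _ => (hXY s t).const_mul _]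
  simp only [dotProduct, mulVec, crossMoment, of_apply, Finset.mul_sum]
  refine Finset.sum_congr rfl fun s _ => ?_
  rw [integral_finsetSum _ fun t _ => (hXY s t).const_mul _]
  refine Finset.sum_congr rfl fun t _ => ?_
  rw [integral_const_mul]; ring

lemma integral_sq_dotProduct_add_dotProduct
    (hXX : ∀ s t, Integrable (fun ω => X ω s * X ω t) μ)
    (hYY : ∀ s t, Integrable (fun ω => Y ω s * Y ω t) μ)
    (hXY : ∀ s t, Integrable (fun ω => X ω s * Y ω t) μ)
    (hXY0 : crossMoment μ X Y = 0) (u v : ι → ℝ) :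
    ∫ ω, (u ⬝ᵥ X ω + v ⬝ᵥ Y ω) ^ 2 ∂μ =
      u ⬝ᵥ crossMoment μ X X *ᵥ u + v ⬝ᵥ crossMoment μ Y Y *ᵥ v := by
  have hsq : ∀ ω, (u ⬝ᵥ X ω + v ⬝ᵥ Y ω) ^ 2 =
      (u ⬝ᵥ X ω) * (u ⬝ᵥ X ω) + 2 * ((u ⬝ᵥ X ω) * (v ⬝ᵥ Y ω)) +
        (v ⬝ᵥ Y ω) * (v ⬝ᵥ Y ω) := fun ω => by ring
  have hXX' := integrable_dotProduct_mul_dotProduct hXX u u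
  have hXY' := (integrable_dotProduct_mul_dotProduct hXY u v).const_mul 2
  have hYY' := integrable_dotProduct_mul_dotProduct hYY v v
  simp only [hsq]
  rw [integral_add (f := fun ω => _ + _) (hXX'.add hXY') hYY', integral_add hXX' hXY',
    integral_const_mul, integral_dotProduct_mul_dotProduct hXX,
    integral_dotProduct_mul_dotProduct hXY, integral_dotProduct_mul_dotProduct hYY, hXY0]
  simp

end SecondMoments

lemma second_difference_eq_of_sq_sub_one_eq_zero {R ι : Type*} [CommRing R] [Fintype ι]
    [DecidableEq ι] {A : Matrix ι ι R} (hA : (A - 1) ^ 2 = 0) {r₀ r₁ r₂ ν₀ ν₁ : ι → R}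
    (h₁ : r₁ = A *ᵥ r₀ + ν₀) (h₂ : r₂ = A *ᵥ r₁ + ν₁) :
    r₂ - 2 • r₁ + r₀ = (A - 2 • 1) *ᵥ ν₀ + ν₁ := by
  have hA' : (A * A - 2 • A + 1) *ᵥ r₀ = 0 := by
    rw [show A * A - 2 • A + 1 = (A - 1) ^ 2 by noncomm_ring, hA, zero_mulVec]
  subst h₁ h₂
  simp only [add_mulVec, sub_mulVec, smul_mulVec, mulVec_mulVec, one_mulVec, mulVec_add] at hA' ⊢
  linear_combination (norm := module) hA'

lemma shear_sub_one_sq_eq_zero {R : Type*} [CommRing R] (τ : R) :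
    (!![1, τ; 0, 1] - 1) ^ 2 = 0 := by
  ext i j; fin_cases i <;> fin_cases j <;> simp [sq, Matrix.mul_apply, Matrix.one_apply]

lemma dotProduct_add_smul_mulVec {n : Type*} [Fintype n] (S₁ S₂ : Matrix n n ℝ) (c d : ℝ)
    (q : n → ℝ) :
    q ⬝ᵥ (c • S₁ + d • S₂) *ᵥ q = c * (q ⬝ᵥ S₁ *ᵥ q) + d * (q ⬝ᵥ S₂ *ᵥ q) := by
  simp only [add_mulVec, smul_mulVec, dotProduct_add, dotProduct_smul, smul_eq_mul]

theorem stmt_13_general {N : ℕ} {Ω : Type*} [MeasurableSpace Ω]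
    (μ : Measure Ω)
    (τ : ℝ)
    (S1 S2 : Matrix (Fin N) (Fin N) ℝ)
    (q : Fin N → ℝ)
    (A : Matrix (Fin 2) (Fin 2) ℝ) (hA : A = !![1, τ; 0, 1])
    (Qc : Matrix (Fin 2) (Fin 2) ℝ)
    (hQc : Qc = !![dotProduct q ((τ • S1 + (τ ^ 3 / 3) • S2).mulVec q),
                   (τ ^ 2 / 2) * dotProduct q (S2.mulVec q);
                   (τ ^ 2 / 2) * dotProduct q (S2.mulVec q),
                   τ * dotProduct q (S2.mulVec q)])
    (ν0 ν1 : Ω → Fin 2 → ℝ)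
    (hint00 : ∀ s t, Integrable (fun ω => ν0 ω s * ν0 ω t) μ)
    (hint11 : ∀ s t, Integrable (fun ω => ν1 ω s * ν1 ω t) μ)
    (hint01 : ∀ s t, Integrable (fun ω => ν0 ω s * ν1 ω t) μ)
    (hcov0 : ∀ s t, ∫ ω, ν0 ω s * ν0 ω t ∂μ = Qc s t)
    (hcov1 : ∀ s t, ∫ ω, ν1 ω s * ν1 ω t ∂μ = Qc s t)
    (hindep : ∀ s t, ∫ ω, ν0 ω s * ν1 ω t ∂μ = 0)
    (r0 r1 r2 : Ω → Fin 2 → ℝ)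
    (hr1 : ∀ ω, r1 ω = A.mulVec (r0 ω) + ν0 ω)
    (hr2 : ∀ ω, r2 ω = A.mulVec (r1 ω) + ν1 ω)
    (d2z : Ω → ℝ)
    (hd2z : ∀ ω, d2z ω = r2 ω 0 - 2 * r1 ω 0 + r0 ω 0) :
    (∀ ω, d2z ω = ((A - 2 • 1).mulVec (ν0 ω)) 0 + ν1 ω 0) ∧
    (∫ ω, (d2z ω) ^ 2 ∂μ =
      dotProduct q (((2 * τ) • S1 + (2 * τ ^ 3 / 3) • S2).mulVec q)) ∧
    ((∫ ω, (d2z ω) ^ 2 ∂μ) / (2 * τ ^ 2) =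
      dotProduct q ((τ • S1 + (τ ^ 3 / 3) • S2).mulVec q) / τ ^ 2) := by
  have hΔ (ω : Ω) : d2z ω = ((A - 2 • 1) *ᵥ ν0 ω) 0 + ν1 ω 0 := by
    have hA2 : (A - 1) ^ 2 = 0 := hA ▸ shear_sub_one_sq_eq_zero τ
    simpa [hd2z] using
      congrFun (second_difference_eq_of_sq_sub_one_eq_zero hA2 (hr1 ω) (hr2 ω)) 0
  have hrow : (A - 2 • 1 : Matrix (Fin 2) (Fin 2) ℝ) 0 = ![-1, τ] := by
    subst hA; ext j; fin_cases j <;> norm_num [ofNat_apply]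
  have hvar : ∫ ω, d2z ω ^ 2 ∂μ =
      q ⬝ᵥ ((2 * τ) • S1 + (2 * τ ^ 3 / 3) • S2) *ᵥ q := by
    have hcross : crossMoment μ ν0 ν1 = 0 := by ext s t; exact hindep s t
    calc ∫ ω, d2z ω ^ 2 ∂μ
        = ∫ ω, (![-1, τ] ⬝ᵥ ν0 ω + Pi.single 0 1 ⬝ᵥ ν1 ω) ^ 2 ∂μ := by
          simp only [hΔ, single_one_dotProduct, ← hrow]; rfl
      _ = ![-1, τ] ⬝ᵥ Qc *ᵥ ![-1, τ] + Pi.single 0 1 ⬝ᵥ Qc *ᵥ Pi.single 0 1 := by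
          rw [integral_sq_dotProduct_add_dotProduct hint00 hint11 hint01 hcross]
          congr <;> ext s t
          exacts [hcov0 s t, hcov1 s t]
      _ = q ⬝ᵥ ((2 * τ) • S1 + (2 * τ ^ 3 / 3) • S2) *ᵥ q := by
          subst hQc
          simp only [dotProduct_add_smul_mulVec]
          generalize q ⬝ᵥ S1 *ᵥ q = a, q ⬝ᵥ S2 *ᵥ q = b
          simp only [dotProduct, mulVec, Fin.sum_univ_two, of_apply, cons_val', cons_val_fin_one,
            cons_val_zero, cons_val_one, Pi.single_eq_same, Pi.single_eq_of_ne one_ne_zero]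
          ring
  refine ⟨hΔ, hvar, ?_⟩
  rw [hvar, dotProduct_add_smul_mulVec, dotProduct_add_smul_mulVec]
  field_simp

theorem stmt_13 {N : ℕ} {Ω : Type*} [MeasurableSpace Ω]
    (μ : Measure Ω) [IsProbabilityMeasure μ]
    (τ : ℝ) (hτ : 0 < τ)
    (s1 s2 : Fin N → ℝ) (hs1 : ∀ i, 0 < s1 i) (hs2 : ∀ i, 0 < s2 i)
    (S1 S2 : Matrix (Fin N) (Fin N) ℝ)
    (hS1 : S1 = Matrix.diagonal s1) (hS2 : S2 = Matrix.diagonal s2)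
    (q : Fin N → ℝ)
    (A : Matrix (Fin 2) (Fin 2) ℝ) (hA : A = !![1, τ; 0, 1])
    (Qc : Matrix (Fin 2) (Fin 2) ℝ)
    (hQc : Qc = !![dotProduct q ((τ • S1 + (τ ^ 3 / 3) • S2).mulVec q),
                   (τ ^ 2 / 2) * dotProduct q (S2.mulVec q);
                   (τ ^ 2 / 2) * dotProduct q (S2.mulVec q),
                   τ * dotProduct q (S2.mulVec q)])
    (ν0 ν1 : Ω → Fin 2 → ℝ)
    (hmean0 : ∀ s, ∫ ω, ν0 ω s ∂μ = 0) (hmean1 : ∀ s, ∫ ω, ν1 ω s ∂μ = 0)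
    (hint00 : ∀ s t, Integrable (fun ω => ν0 ω s * ν0 ω t) μ)
    (hint11 : ∀ s t, Integrable (fun ω => ν1 ω s * ν1 ω t) μ)
    (hint01 : ∀ s t, Integrable (fun ω => ν0 ω s * ν1 ω t) μ)
    (hcov0 : ∀ s t, ∫ ω, ν0 ω s * ν0 ω t ∂μ = Qc s t)
    (hcov1 : ∀ s t, ∫ ω, ν1 ω s * ν1 ω t ∂μ = Qc s t)
    (hindep : ∀ s t, ∫ ω, ν0 ω s * ν1 ω t ∂μ = 0)
    (r0 r1 r2 : Ω → Fin 2 → ℝ)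
    (hr1 : ∀ ω, r1 ω = A.mulVec (r0 ω) + ν0 ω)
    (hr2 : ∀ ω, r2 ω = A.mulVec (r1 ω) + ν1 ω)
    (d2z : Ω → ℝ)
    (hd2z : ∀ ω, d2z ω = r2 ω 0 - 2 * r1 ω 0 + r0 ω 0) :
    (∀ ω, d2z ω = ((A - 2 • 1).mulVec (ν0 ω)) 0 + ν1 ω 0) ∧
    (∫ ω, (d2z ω) ^ 2 ∂μ =
      dotProduct q (((2 * τ) • S1 + (2 * τ ^ 3 / 3) • S2).mulVec q)) ∧
    ((∫ ω, (d2z ω) ^ 2 ∂μ) / (2 * τ ^ 2) =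
      dotProduct q ((τ • S1 + (τ ^ 3 / 3) • S2).mulVec q) / τ ^ 2) :=
  stmt_13_general μ τ S1 S2 q A hA Qc hQc ν0 ν1 hint00 hint11 hint01 hcov0 hcov1 hindep r0 r1 r2 hr1
    hr2 d2z hd2z
end

section
/- With H := PCᵀ(CPCᵀ + R)^{−1}, one has (I − HC)ᵀ = (I + CᵀR^{−1}CP)^{−1} whenever P is symmetric positive semidefinite, R symmetric positive definite. -/
open Matrix

theorem stmt_15 {n m : ℕ} (P : Matrix (Fin n) (Fin n) ℝ) (hP : P.PosSemidef)
    (C : Matrix (Fin m) (Fin n) ℝ) (R : Matrix (Fin m) (Fin m) ℝ) (hR : R.PosDef)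
    (H : Matrix (Fin n) (Fin m) ℝ) (hH : H = P * Cᵀ * (C * P * Cᵀ + R)⁻¹) :
    (1 - H * C)ᵀ = (1 + Cᵀ * R⁻¹ * C * P)⁻¹ := by
  set S : Matrix (Fin m) (Fin m) ℝ := C * P * Cᵀ + R with hSdef
  have hK : ((C * P * Cᵀ : Matrix (Fin m) (Fin m) ℝ)).PosSemidef := by
    simpa using hP.mul_mul_conjTranspose_same C
  have hS : S.PosDef := Matrix.PosDef.posSemidef_add hK hR
  have hSu : IsUnit S.det := hS.det_pos.ne'.isUnit
  have hRu : IsUnit R.det := hR.det_pos.ne'.isUnit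
  have hSS : S * S⁻¹ = 1 := mul_nonsing_inv S hSu
  have hRR' : R⁻¹ * R = 1 := nonsing_inv_mul R hRu
  have hPsym : Pᵀ = P := by simpa using hP.isHermitian.eq
  have hSsym : Sᵀ = S := by simpa using hS.isHermitian.eq
  have hSinvSym : (S⁻¹)ᵀ = S⁻¹ := by
    rw [transpose_nonsing_inv, hSsym]
  have hLHS : (1 - H * C)ᵀ = 1 - Cᵀ * S⁻¹ * C * P := by
    rw [hH, transpose_sub, transpose_one, transpose_mul, transpose_mul, transpose_mul,
      hSinvSym, transpose_transpose, hPsym]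
    simp only [Matrix.mul_assoc]
  have key : R⁻¹ * (C * P * Cᵀ) * S⁻¹ = R⁻¹ - S⁻¹ := by
    have h1 : (C * P * Cᵀ : Matrix (Fin m) (Fin m) ℝ) = S - R := by
      rw [hSdef]; abel
    rw [h1, mul_sub, sub_mul, hRR', mul_assoc, hSS, mul_one, one_mul]
  have hAB : (Cᵀ * R⁻¹ * C * P) * (Cᵀ * S⁻¹ * C * P)
      = Cᵀ * R⁻¹ * C * P - Cᵀ * S⁻¹ * C * P := by
    have h2 : (Cᵀ * R⁻¹ * C * P) * (Cᵀ * S⁻¹ * C * P)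
        = Cᵀ * (R⁻¹ * (C * P * Cᵀ) * S⁻¹) * C * P := by
      simp only [Matrix.mul_assoc]
    rw [h2, key, Matrix.mul_sub, Matrix.sub_mul, Matrix.sub_mul]
  have main : (1 + Cᵀ * R⁻¹ * C * P) * (1 - Cᵀ * S⁻¹ * C * P) = 1 := by
    have h3 : (1 + Cᵀ * R⁻¹ * C * P) * (1 - Cᵀ * S⁻¹ * C * P)
        = 1 - Cᵀ * S⁻¹ * C * P +
          (Cᵀ * R⁻¹ * C * P - (Cᵀ * R⁻¹ * C * P) * (Cᵀ * S⁻¹ * C * P)) := by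
      rw [Matrix.add_mul, Matrix.one_mul, Matrix.mul_sub, Matrix.mul_one]
    rw [h3, hAB]
    abel
  rw [hLHS, Matrix.inv_eq_right_inv main]
end
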